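/- arXiv:2507.17503 — 4 statements merged into one kernel-verified Lean document; each statement's English description precedes it below -/
import Mathlib

section
/- No uncountable closed subset of ℝ is 2-entangled. Consequently, no 2-entangled set of reals (with its natural order) contains an uncountable closed set. -/
def Realizes {n : ℕ} (t : Fin n → Bool) (e e' : Fin n → ℝ) : Prop :=
  (∀ i, t i = true ↔ e' i < e i) ∨ (∀ i, t i = true ↔ e i < e' i)

/-- A set of reals `E` (with its natural order) is 2-entangled. -/
def TwoEntangledSet (E : Set ℝ) : Prop :=
  ∀ F : Set (Fin 2 → ℝ), ¬F.Countable →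
    (∀ e ∈ F, ∀ i, e i ∈ E) →
    (∀ e ∈ F, Function.Injective e) →
    (F.Pairwise fun e e' => ∀ i j, e i ≠ e' j) →
    ∀ t : Fin 2 → Bool, ∃ e ∈ F, ∃ e' ∈ F, e ≠ e' ∧ Realizes t e e'

open Set

theorem uncBool : Uncountable (ℕ → Bool) := by
  rw [uncountable_iff_forall_not_surjective]
  intro f hf
  obtain ⟨n, hn⟩ := hf (fun k => !(f k k))
  have := congrFun hn n
  simp at this

/-- Iterate a binary splitting function along a list of bits. -/
def iterI (q : Bool → ℝ × ℝ → ℝ × ℝ) (init : ℝ × ℝ) : List Bool → ℝ × ℝ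
  | [] => init
  | i :: σ => q i (iterI q init σ)

/-- The list of the first `n` values of `s`, most recent first. -/
def Ltr (s : ℕ → Bool) : ℕ → List Bool
  | 0 => []
  | n + 1 => s n :: Ltr s n

theorem Ltr_eq {u v : ℕ → Bool} : ∀ n, (∀ k < n, u k = v k) → Ltr u n = Ltr v n := by
  intro n
  induction n with
  | zero => intro _; rfl
  | succ m ih =>
      intro h
      simp only [Ltr]
      rw [h m (Nat.lt_succ_self m), ih (fun k hk => h k (Nat.lt_succ_of_lt hk))]

/-- Prepend a bit to a sequence. -/
def cns (b : Bool) (s : ℕ → Bool) : ℕ → Bool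
  | 0 => b
  | n + 1 => s n

theorem key_closed (C : Set ℝ) (hC : IsClosed C) (hunc : ¬C.Countable) :
    ¬TwoEntangledSet C := by
  intro hent
  -- Step A: find a compact uncountable piece
  obtain ⟨n, hn⟩ : ∃ n : ℤ, ¬(C ∩ Icc (n : ℝ) (n + 1)).Countable := by
    by_contra h
    push_neg at h
    apply hunc
    have hcov : C = ⋃ n : ℤ, C ∩ Icc (n : ℝ) (n + 1) := by
      ext y; constructor
      · intro hy
        exact mem_iUnion.2 ⟨⌊y⌋, hy, Int.floor_le y, (Int.lt_floor_add_one y).le⟩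
      · rintro hy
        obtain ⟨_, ⟨_, rfl⟩, hy1, _⟩ := hy
        exact hy1
    rw [hcov]
    exact countable_iUnion h
  set K0 : Set ℝ := C ∩ Icc (n : ℝ) (n + 1) with hK0def
  have hK0closed : IsClosed K0 := hC.inter isClosed_Icc
  have hK0cpt : IsCompact K0 :=
    IsCompact.of_isClosed_subset isCompact_Icc hK0closed inter_subset_right
  -- condensation kernel
  set Q : Set (ℚ × ℚ) := {q | (K0 ∩ Ioo (q.1 : ℝ) (q.2 : ℝ)).Countable} with hQdef
  set U : Set ℝ := ⋃ q ∈ Q, Ioo (q.1 : ℝ) (q.2 : ℝ) with hUdef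
  set K : Set ℝ := K0 \ U with hKdef
  have hUopen : IsOpen U := isOpen_biUnion fun q _ => isOpen_Ioo
  have hKclosed : IsClosed K := hK0closed.sdiff hUopen
  have hKsub : K ⊆ K0 := diff_subset
  have hdiffctble : (K0 \ K).Countable := by
    have hsub : K0 \ K ⊆ ⋃ q ∈ Q, (K0 ∩ Ioo (q.1 : ℝ) (q.2 : ℝ)) := by
      intro y hy
      have hy0 : y ∈ K0 := hy.1
      have hyU : y ∈ U := by
        by_contra hyU
        exact hy.2 ⟨hy0, hyU⟩
      obtain ⟨q, hq, hyq⟩ := mem_iUnion₂.1 hyU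
      exact mem_iUnion₂.2 ⟨q, hq, hy0, hyq⟩
    exact (Set.Countable.biUnion (Set.to_countable Q) fun q hq => hq).mono hsub
  have hKunc : ¬K.Countable := by
    intro h
    apply hn
    have : K0 ⊆ K ∪ (K0 \ K) := fun y hy => by
      by_cases hyK : y ∈ K
      · exact Or.inl hyK
      · exact Or.inr ⟨hy, hyK⟩
    exact (h.union hdiffctble).mono this
  have hKcpt : IsCompact K := IsCompact.of_isClosed_subset hK0cpt hKclosed hKsub
  have hcond : ∀ x ∈ K, ∀ ε > 0, ¬(K ∩ Ioo (x - ε) (x + ε)).Countable := by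
    intro x hx ε hε hcount
    obtain ⟨q1, hq1, hq1'⟩ := exists_rat_btwn (show x - ε < x by linarith)
    obtain ⟨q2, hq2, hq2'⟩ := exists_rat_btwn (show x < x + ε by linarith)
    have hQmem : (q1, q2) ∉ Q := by
      intro hmem
      exact hx.2 (mem_iUnion₂.2 ⟨(q1, q2), hmem, hq1', hq2⟩)
    apply hQmem
    show (K0 ∩ Ioo ((q1 : ℝ)) ((q2 : ℝ))).Countable
    have hsplit : K0 ∩ Ioo (q1 : ℝ) (q2 : ℝ) ⊆ (K ∩ Ioo (x - ε) (x + ε)) ∪ (K0 \ K) := by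
      rintro y ⟨hy0, hy1, hy2⟩
      by_cases hyK : y ∈ K
      · exact Or.inl ⟨hyK, by constructor <;> linarith⟩
      · exact Or.inr ⟨hy0, hyK⟩
    exact ((hcount.union hdiffctble)).mono hsplit
  -- Step B: splitting
  have split : ∀ p : ℝ × ℝ, ∃ q0 q1 : ℝ × ℝ,
      (p.1 < p.2 ∧ ¬(K ∩ Ioo p.1 p.2).Countable) →
      ((q0.1 < q0.2 ∧ ¬(K ∩ Ioo q0.1 q0.2).Countable) ∧
       (q1.1 < q1.2 ∧ ¬(K ∩ Ioo q1.1 q1.2).Countable) ∧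
       p.1 < q0.1 ∧ q0.2 < q1.1 ∧ q1.2 < p.2) := by
    intro p
    by_cases hp : p.1 < p.2 ∧ ¬(K ∩ Ioo p.1 p.2).Countable
    · obtain ⟨hlt, hcnt⟩ := hp
      have hnt : (K ∩ Ioo p.1 p.2).Nontrivial := by
        rw [← Set.not_subsingleton_iff]
        exact fun h => hcnt h.countable
      obtain ⟨c, hc, d, hd, hcd⟩ :
          ∃ c ∈ K ∩ Ioo p.1 p.2, ∃ d ∈ K ∩ Ioo p.1 p.2, c < d := by
        obtain ⟨c, hc, d, hd, hne⟩ := hnt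
        rcases hne.lt_or_gt with h | h
        · exact ⟨c, hc, d, hd, h⟩
        · exact ⟨d, hd, c, hc, h⟩
      have hc1 := hc.2.1; have hc2 := hc.2.2
      have hd1 := hd.2.1; have hd2 := hd.2.2
      set ε : ℝ := min (min (c - p.1) (p.2 - d)) ((d - c) / 2) / 2 with hεdef
      have hmpos : 0 < min (min (c - p.1) (p.2 - d)) ((d - c) / 2) :=
        lt_min (lt_min (by linarith) (by linarith)) (by linarith)
      have hεpos : 0 < ε := by rw [hεdef]; linarith
      have ha : min (min (c - p.1) (p.2 - d)) ((d - c) / 2) ≤ c - p.1 :=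
        le_trans (min_le_left _ _) (min_le_left _ _)
      have hb : min (min (c - p.1) (p.2 - d)) ((d - c) / 2) ≤ p.2 - d :=
        le_trans (min_le_left _ _) (min_le_right _ _)
      have hcm : min (min (c - p.1) (p.2 - d)) ((d - c) / 2) ≤ (d - c) / 2 :=
        min_le_right _ _
      have h2a : 2 * ε ≤ c - p.1 := by rw [hεdef]; linarith
      have h2b : 2 * ε ≤ p.2 - d := by rw [hεdef]; linarith
      have h2c : 2 * ε ≤ (d - c) / 2 := by rw [hεdef]; linarith
      refine ⟨(c - ε, c + ε), (d - ε, d + ε), fun _ => ?_⟩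
      exact ⟨⟨show c - ε < c + ε by linarith, hcond c hc.1 ε hεpos⟩,
        ⟨show d - ε < d + ε by linarith, hcond d hd.1 ε hεpos⟩,
        show p.1 < c - ε by linarith, show c + ε < d - ε by linarith,
        show d + ε < p.2 by linarith⟩
    · exact ⟨p, p, fun h => absurd h hp⟩
  choose f0 f1 hsplit using split
  have hKne : K.Nonempty := by
    rw [nonempty_iff_ne_empty]
    intro h
    exact hKunc (by rw [h]; exact countable_empty)
  obtain ⟨x0, hx0⟩ := hKne
  set q : Bool → ℝ × ℝ → ℝ × ℝ := fun i p => cond i (f1 p) (f0 p) with hqdef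
  set I : List Bool → ℝ × ℝ := iterI q (x0 - 1, x0 + 1) with hIdef
  have hIcons : ∀ (i : Bool) (σ : List Bool), I (i :: σ) = q i (I σ) := fun i σ => rfl
  have hPinit : (x0 - 1 < x0 + 1 ∧ ¬(K ∩ Ioo (x0 - 1) (x0 + 1)).Countable) :=
    ⟨by linarith, hcond x0 hx0 1 one_pos⟩
  have hPI : ∀ σ : List Bool, (I σ).1 < (I σ).2 ∧ ¬(K ∩ Ioo (I σ).1 (I σ).2).Countable := by
    intro σ
    induction σ with
    | nil => exact hPinit
    | cons i σ ih =>
        have h := hsplit (I σ) ih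
        cases i
        · exact h.1
        · exact h.2.1
  have hnest : ∀ (σ : List Bool) (i : Bool),
      (I σ).1 < (I (i :: σ)).1 ∧ (I (i :: σ)).2 < (I σ).2 := by
    intro σ i
    have h := hsplit (I σ) (hPI σ)
    obtain ⟨⟨h0lt, -⟩, ⟨h1lt, -⟩, ha, hbb, hcc⟩ := h
    cases i
    · exact ⟨ha, by simp only [hIcons]; show (f0 (I σ)).2 < (I σ).2; linarith⟩
    · exact ⟨by show (I σ).1 < (f1 (I σ)).1; linarith,
        by show (f1 (I σ)).2 < (I σ).2; linarith⟩
  have hsep : ∀ σ : List Bool, (I (false :: σ)).2 < (I (true :: σ)).1 := by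
    intro σ
    exact (hsplit (I σ) (hPI σ)).2.2.2.1
  -- the points
  have hxex : ∀ s : ℕ → Bool, ∃ y, y ∈ ⋂ m, (K ∩ Icc (I (Ltr s m)).1 (I (Ltr s m)).2) := by
    intro s
    apply IsCompact.nonempty_iInter_of_sequence_nonempty_isCompact_isClosed
    · intro m
      rintro y ⟨hyK, hy1, hy2⟩
      refine ⟨hyK, ?_, ?_⟩
      · have := (hnest (Ltr s m) (s m)).1
        simp only [Ltr] at hy1
        linarith
      · have := (hnest (Ltr s m) (s m)).2
        simp only [Ltr] at hy2
        linarith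
    · intro m
      have h := (hPI (Ltr s m)).2
      have hne : (K ∩ Ioo (I (Ltr s m)).1 (I (Ltr s m)).2).Nonempty := by
        rw [nonempty_iff_ne_empty]
        intro h0
        exact h (by rw [h0]; exact countable_empty)
      obtain ⟨y, hy⟩ := hne
      exact ⟨y, hy.1, le_of_lt hy.2.1, le_of_lt hy.2.2⟩
    · exact IsCompact.of_isClosed_subset hKcpt (hKclosed.inter isClosed_Icc) inter_subset_left
    · exact fun m => hKclosed.inter isClosed_Icc
  choose x hx using hxex
  have hxK : ∀ s, x s ∈ K := fun s => (mem_iInter.1 (hx s) 0).1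
  have hxIcc : ∀ s m, x s ∈ Icc (I (Ltr s m)).1 (I (Ltr s m)).2 :=
    fun s m => (mem_iInter.1 (hx s) m).2
  -- the order lemma
  have hlt : ∀ u v : ℕ → Bool, ∀ m : ℕ, (∀ k < m, u k = v k) →
      u m = false → v m = true → x u < x v := by
    intro u v m hk hu hv
    have hσ : Ltr u m = Ltr v m := Ltr_eq m hk
    have h1 : x u ≤ (I (Ltr u (m + 1))).2 := (hxIcc u (m + 1)).2
    have h2 : (I (Ltr v (m + 1))).1 ≤ x v := (hxIcc v (m + 1)).1
    have e1 : Ltr u (m + 1) = false :: Ltr u m := by simp [Ltr, hu]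
    have e2 : Ltr v (m + 1) = true :: Ltr u m := by simp [Ltr, hv, hσ]
    rw [e1] at h1
    rw [e2] at h2
    have := hsep (Ltr u m)
    linarith
  have h01 : ∀ s s' : ℕ → Bool, x (cns false s) < x (cns true s') := by
    intro s s'
    exact hlt _ _ 0 (fun k hk => absurd hk (Nat.not_lt_zero k)) rfl rfl
  have hpar : ∀ s s' : ℕ → Bool, s ≠ s' →
      (x (cns false s) < x (cns false s') ∧ x (cns true s) < x (cns true s')) ∨
      (x (cns false s') < x (cns false s) ∧ x (cns true s') < x (cns true s)) := by
    intro s s' hne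
    have hex : ∃ k, s k ≠ s' k := by
      by_contra h
      push_neg at h
      exact hne (funext h)
    have hn' : s (Nat.find hex) ≠ s' (Nat.find hex) := Nat.find_spec hex
    set m := Nat.find hex with hmdef
    have hmin : ∀ k < m, s k = s' k := fun k hk => not_not.1 (Nat.find_min hex hk)
    have hagree : ∀ b : Bool, ∀ k < m + 1, cns b s k = cns b s' k := by
      intro b k hk
      cases k with
      | zero => rfl
      | succ j => exact hmin j (by omega)
    cases hs : s m with
    | false =>
        have hs' : s' m = true := by
          cases h' : s' m
          · exact absurd (hs.trans h'.symm) hn'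
          · rfl
        exact Or.inl ⟨hlt _ _ (m + 1) (hagree false) hs hs',
          hlt _ _ (m + 1) (hagree true) hs hs'⟩
    | true =>
        have hs' : s' m = false := by
          cases h' : s' m
          · rfl
          · exact absurd (hs.trans h'.symm) hn'
        exact Or.inr ⟨hlt _ _ (m + 1) (fun k hk => (hagree false k hk).symm) hs' hs,
          hlt _ _ (m + 1) (fun k hk => (hagree true k hk).symm) hs' hs⟩
  -- the family
  set e : (ℕ → Bool) → (Fin 2 → ℝ) := fun s => ![x (cns false s), x (cns true s)] with hedef
  have he0 : ∀ s, e s 0 = x (cns false s) := fun s => rfl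
  have he1 : ∀ s, e s 1 = x (cns true s) := fun s => rfl
  have heinj : Function.Injective e := by
    intro s s' h
    by_contra hne
    have h0 : e s 0 = e s' 0 := by rw [h]
    rw [he0, he0] at h0
    rcases hpar s s' hne with ⟨h1, -⟩ | ⟨h1, -⟩
    · exact absurd h0 (ne_of_lt h1)
    · exact absurd h0 (ne_of_gt h1)
  have hKC : K ⊆ C := fun y hy => (hKsub hy).1
  have hcount : ¬(Set.range e).Countable := by
    intro h
    have h2 : Countable ↥(Set.range e) := h.to_subtype
    have hinj : Function.Injective (fun s => (⟨e s, mem_range_self s⟩ : ↥(Set.range e))) := by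
      intro s s' hss
      exact heinj (congrArg Subtype.val hss)
    have h3 : Countable (ℕ → Bool) := hinj.countable
    exact @not_countable _ uncBool h3
  have hmem : ∀ a ∈ Set.range e, ∀ i, a i ∈ C := by
    rintro a ⟨s, rfl⟩ i
    have : e s i = x (cns false s) ∨ e s i = x (cns true s) := by
      fin_cases i
      · exact Or.inl (he0 s)
      · exact Or.inr (he1 s)
    rcases this with h | h <;> rw [h] <;> exact hKC (hxK _)
  have hinj2 : ∀ a ∈ Set.range e, Function.Injective a := by
    rintro a ⟨s, rfl⟩
    have hne2 : e s 0 ≠ e s 1 := by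
      rw [he0, he1]
      exact ne_of_lt (h01 s s)
    intro i j hij
    fin_cases i <;> fin_cases j
    · rfl
    · exact absurd hij hne2
    · exact absurd hij.symm hne2
    · rfl
  have hpw : (Set.range e).Pairwise fun a b => ∀ i j, a i ≠ b j := by
    rintro a ⟨s, rfl⟩ b ⟨s', rfl⟩ hne i j
    have hss : s ≠ s' := fun h => hne (congrArg e h)
    have h3 := h01 s s'
    have h4 := h01 s' s
    rcases hpar s s' hss with ⟨h1, h2⟩ | ⟨h1, h2⟩ <;> fin_cases i <;> fin_cases j <;>
      simp only [he0, he1] <;>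
      first
        | exact ne_of_lt h1
        | exact ne_of_gt h1
        | exact ne_of_lt h2
        | exact ne_of_gt h2
        | exact ne_of_lt h3
        | exact ne_of_gt h4
  obtain ⟨a, ha, b, hb, hab, hreal⟩ :=
    hent (Set.range e) hcount hmem hinj2 hpw ![true, false]
  obtain ⟨s, rfl⟩ := ha
  obtain ⟨s', rfl⟩ := hb
  have hss : s ≠ s' := fun h => hab (congrArg e h)
  rcases hreal with h | h
  · have hA : e s' 0 < e s 0 := (h 0).1 rfl
    have hB : ¬(e s' 1 < e s 1) := fun hl => by simpa using (h 1).2 hl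
    rw [he0, he0] at hA
    rw [he1, he1] at hB
    rcases hpar s s' hss with ⟨h1, h2⟩ | ⟨h1, h2⟩
    · exact absurd hA (asymm h1)
    · exact hB h2
  · have hA : e s 0 < e s' 0 := (h 0).1 rfl
    have hB : ¬(e s 1 < e s' 1) := fun hl => by simpa using (h 1).2 hl
    rw [he0, he0] at hA
    rw [he1, he1] at hB
    rcases hpar s s' hss with ⟨h1, h2⟩ | ⟨h1, h2⟩
    · exact hB h2
    · exact absurd hA (asymm h1)

/-- No uncountable closed subset of `ℝ` is 2-entangled; consequently, no
2-entangled set of reals contains an uncountable closed set. -/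
theorem no_uncountable_closed_twoEntangled :
    (∀ C : Set ℝ, IsClosed C → ¬C.Countable → ¬TwoEntangledSet C) ∧
    (∀ E : Set ℝ, TwoEntangledSet E → ∀ C : Set ℝ, C ⊆ E → IsClosed C → C.Countable) := by
  refine ⟨key_closed, ?_⟩
  intro E hE C hCE hcl
  by_contra hunc
  exact key_closed C hcl hunc
    (fun F hF hmem hinj hpw t =>
      hE F hF (fun a ha i => hCE (hmem a ha i)) hinj hpw t)
end

section
/- No uncountable analytic subset of ℝ is 2-entangled. -/
open Set

namespace NoEnt

/-- Strict lexicographic order on `ℕ → Bool`, with `false < true`. -/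
def LexLt (a b : ℕ → Bool) : Prop :=
  ∃ n, (∀ m < n, a m = b m) ∧ a n = false ∧ b n = true

lemma lexLt_total {a b : ℕ → Bool} (h : a ≠ b) : LexLt a b ∨ LexLt b a := by
  classical
  have hex : ∃ n, a n ≠ b n := by
    by_contra hc; push_neg at hc; exact h (funext hc)
  have hm : ∀ m < Nat.find hex, a m = b m := by
    intro m hmn
    by_contra hc
    exact Nat.find_min hex hmn hc
  have hns : a (Nat.find hex) ≠ b (Nat.find hex) := Nat.find_spec hex
  cases ha : a (Nat.find hex) <;> cases hb : b (Nat.find hex)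
  · rw [ha, hb] at hns; exact absurd rfl hns
  · exact Or.inl ⟨Nat.find hex, hm, ha, hb⟩
  · exact Or.inr ⟨Nat.find hex, fun m hmn => (hm m hmn).symm, hb, ha⟩
  · rw [ha, hb] at hns; exact absurd rfl hns

/-- Prepend a bit. -/
def bcons (b : Bool) (s : ℕ → Bool) : ℕ → Bool := fun n =>
  match n with
  | 0 => b
  | k + 1 => s k

lemma lexLt_bcons {s s' : ℕ → Bool} (b : Bool) (h : LexLt s s') :
    LexLt (bcons b s) (bcons b s') := by
  obtain ⟨n, hm, h0, h1⟩ := h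
  refine ⟨n + 1, ?_, h0, h1⟩
  intro m hmn
  match m with
  | 0 => rfl
  | k + 1 => exact hm k (by omega)

lemma lexLt_bcons_false_true (s s' : ℕ → Bool) :
    LexLt (bcons false s) (bcons true s') :=
  ⟨0, fun m hm => absurd hm (by omega), rfl, rfl⟩

lemma nonempty_of_not_countable {α : Type*} {S : Set α} (h : ¬S.Countable) : S.Nonempty := by
  rcases S.eq_empty_or_nonempty with rfl | hne
  · exact absurd countable_empty h
  · exact hne

/-- An uncountable set of reals can be split, with a gap, into two uncountable pieces. -/
lemma split_ex {S : Set ℝ} (hS : ¬S.Countable) :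
    ∃ m m' : ℝ, m < m' ∧ ¬(S ∩ Iio m).Countable ∧ ¬(S ∩ Ioi m').Countable := by
  set P : Set ℝ :=
    {x | ∀ q1 q2 : ℚ, (q1 : ℝ) < x → x < (q2 : ℝ) → ¬(S ∩ Ioo (q1 : ℝ) (q2 : ℝ)).Countable}
    with hP
  have hSP : ¬(S ∩ P).Countable := by
    intro hc
    apply hS
    have hsub : S ⊆ (S ∩ P) ∪
        ⋃ p ∈ {p : ℚ × ℚ | (S ∩ Ioo (p.1 : ℝ) (p.2 : ℝ)).Countable},
          S ∩ Ioo (p.1 : ℝ) (p.2 : ℝ) := by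
      intro x hx
      by_cases hxP : x ∈ P
      · exact Or.inl ⟨hx, hxP⟩
      · right
        rw [hP, mem_setOf_eq] at hxP
        push_neg at hxP
        obtain ⟨q1, q2, h1, h2, h3⟩ := hxP
        exact mem_biUnion (x := (q1, q2)) h3 ⟨hx, h1, h2⟩
    refine Countable.mono hsub ?_
    exact hc.union (Set.Countable.biUnion (Set.to_countable _) fun p hp => hp)
  obtain ⟨x, hxS, hxP⟩ := nonempty_of_not_countable hSP
  have h2 : ∃ y ∈ S ∩ P, y ≠ x := by
    by_contra hc
    push_neg at hc
    apply hSP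
    refine Countable.mono (fun z hz => ?_) (countable_singleton x)
    exact hc z hz
  obtain ⟨y, ⟨hyS, hyP⟩, hyx⟩ := h2
  -- wlog x < y
  rcases lt_or_gt_of_ne hyx.symm with hxy | hxy
  · -- x < y
    obtain ⟨q, hq1, hq2⟩ := exists_rat_btwn hxy
    obtain ⟨r, hr1, hr2⟩ := exists_rat_btwn hq2
    refine ⟨(q : ℝ), (r : ℝ), hr1, ?_, ?_⟩
    · obtain ⟨p, hp⟩ := exists_rat_lt x
      obtain ⟨s, hs1, hs2⟩ := exists_rat_btwn hq1
      intro hc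
      apply hxP p s hp hs1
      apply Set.Countable.mono _ hc
      intro z hz
      exact ⟨hz.1, lt_trans hz.2.2 hs2⟩
    · obtain ⟨w, hw⟩ := exists_rat_gt y
      obtain ⟨t, ht1, ht2⟩ := exists_rat_btwn hr2
      intro hc
      apply hyP t w ht2 hw
      apply Set.Countable.mono _ hc
      intro z hz
      exact ⟨hz.1, lt_trans ht1 hz.2.1⟩
  · -- y < x : symmetric
    obtain ⟨q, hq1, hq2⟩ := exists_rat_btwn hxy
    obtain ⟨r, hr1, hr2⟩ := exists_rat_btwn hq2
    refine ⟨(q : ℝ), (r : ℝ), hr1, ?_, ?_⟩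
    · obtain ⟨p, hp⟩ := exists_rat_lt y
      obtain ⟨s, hs1, hs2⟩ := exists_rat_btwn hq1
      intro hc
      apply hyP p s hp hs1
      apply Set.Countable.mono _ hc
      intro z hz
      exact ⟨hz.1, lt_trans hz.2.2 hs2⟩
    · obtain ⟨w, hw⟩ := exists_rat_gt x
      obtain ⟨t, ht1, ht2⟩ := exists_rat_btwn hr2
      intro hc
      apply hxP t w ht2 hw
      apply Set.Countable.mono _ hc
      intro z hz
      exact ⟨hz.1, lt_trans ht1 hz.2.1⟩

variable (f : (ℕ → ℕ) → ℝ)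

/-- A good set at level `n`: uncountable image and all members agree below `n`. -/
def Good (n : ℕ) (A : Set (ℕ → ℕ)) : Prop :=
  ¬(f '' A).Countable ∧ ∀ u ∈ A, ∀ v ∈ A, ∀ k < n, u k = v k

lemma shrink_ex {A : Set (ℕ → ℕ)} (hA : ¬(f '' A).Countable) (n : ℕ) :
    ∃ j : ℕ, ¬(f '' {u | u ∈ A ∧ u n = j}).Countable := by
  by_contra hc
  push_neg at hc
  apply hA
  have : f '' A = ⋃ j, f '' {u | u ∈ A ∧ u n = j} := by
    ext x
    simp only [mem_iUnion, mem_image, mem_setOf_eq]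
    constructor
    · rintro ⟨u, hu, rfl⟩; exact ⟨u n, u, ⟨hu, rfl⟩, rfl⟩
    · rintro ⟨j, u, ⟨hu, _⟩, rfl⟩; exact ⟨u, hu, rfl⟩
  rw [this]
  exact countable_iUnion hc

lemma step_ex {n : ℕ} {A : Set (ℕ → ℕ)} (h : Good f n A) :
    ∃ p : (Set (ℕ → ℕ) × Set (ℕ → ℕ)) × ℝ × ℝ,
      p.1.1 ⊆ A ∧ p.1.2 ⊆ A ∧ Good f (n + 1) p.1.1 ∧ Good f (n + 1) p.1.2 ∧
      p.2.1 < p.2.2 ∧ f '' p.1.1 ⊆ Iio p.2.1 ∧ f '' p.1.2 ⊆ Ioi p.2.2 := by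
  obtain ⟨m, m', hmm, hL, hR⟩ := split_ex h.1
  have hLi : ¬(f '' (A ∩ f ⁻¹' Iio m)).Countable := by
    rwa [Set.image_inter_preimage]
  have hRi : ¬(f '' (A ∩ f ⁻¹' Ioi m')).Countable := by
    rwa [Set.image_inter_preimage]
  obtain ⟨j0, hj0⟩ := shrink_ex f hLi n
  obtain ⟨j1, hj1⟩ := shrink_ex f hRi n
  refine ⟨(({u | u ∈ A ∩ f ⁻¹' Iio m ∧ u n = j0}, {u | u ∈ A ∩ f ⁻¹' Ioi m' ∧ u n = j1}), m, m'),
    fun u hu => hu.1.1, fun u hu => hu.1.1, ?_, ?_, hmm, ?_, ?_⟩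
  · refine ⟨hj0, ?_⟩
    intro u hu v hv k hk
    rcases Nat.lt_succ_iff_lt_or_eq.1 hk with hk' | rfl
    · exact h.2 u hu.1.1 v hv.1.1 k hk'
    · rw [hu.2, hv.2]
  · refine ⟨hj1, ?_⟩
    intro u hu v hv k hk
    rcases Nat.lt_succ_iff_lt_or_eq.1 hk with hk' | rfl
    · exact h.2 u hu.1.1 v hv.1.1 k hk'
    · rw [hu.2, hv.2]
  · rintro x ⟨u, hu, rfl⟩; exact hu.1.2
  · rintro x ⟨u, hu, rfl⟩; exact hu.1.2

open Classical in
noncomputable def stepFn (n : ℕ) (A : Set (ℕ → ℕ)) : (Set (ℕ → ℕ) × Set (ℕ → ℕ)) × ℝ × ℝ :=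
  if h : Good f n A then (step_ex f h).choose else ((∅, ∅), 0, 0)

lemma stepFn_spec {n : ℕ} {A : Set (ℕ → ℕ)} (h : Good f n A) :
    (stepFn f n A).1.1 ⊆ A ∧ (stepFn f n A).1.2 ⊆ A ∧
    Good f (n + 1) (stepFn f n A).1.1 ∧ Good f (n + 1) (stepFn f n A).1.2 ∧
    (stepFn f n A).2.1 < (stepFn f n A).2.2 ∧
    f '' (stepFn f n A).1.1 ⊆ Iio (stepFn f n A).2.1 ∧
    f '' (stepFn f n A).1.2 ⊆ Ioi (stepFn f n A).2.2 := by
  rw [stepFn, dif_pos h]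
  exact (step_ex f h).choose_spec

/-- The Cantor scheme: `node l` for `l` a (reversed) finite branch. -/
noncomputable def node : List Bool → Set (ℕ → ℕ)
  | [] => univ
  | b :: t => if b then (stepFn f t.length (node t)).1.2 else (stepFn f t.length (node t)).1.1

variable {f}

lemma node_good (hf0 : ¬(range f).Countable) : ∀ l : List Bool, Good f l.length (node f l) := by
  intro l
  induction l with
  | nil =>
      constructor
      · rw [node, image_univ]; exact hf0
      · intro u _ v _ k hk; exact absurd hk (Nat.not_lt_zero k)
  | cons b t ih =>
      have hs := stepFn_spec f ih
      rw [node]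
      cases b
      · simpa using hs.2.2.1
      · simpa using hs.2.2.2.1

lemma node_cons_subset (hf0 : ¬(range f).Countable) (b : Bool) (t : List Bool) :
    node f (b :: t) ⊆ node f t := by
  have hs := stepFn_spec f (node_good hf0 t)
  rw [node]
  cases b
  · simpa using hs.1
  · simpa using hs.2.1

/-- prefix of length `n`, reversed (most recent bit first). -/
def pfx (a : ℕ → Bool) : ℕ → List Bool
  | 0 => []
  | n + 1 => a n :: pfx a n

lemma pfx_length (a : ℕ → Bool) : ∀ n, (pfx a n).length = n
  | 0 => rfl
  | n + 1 => by rw [pfx, List.length_cons, pfx_length a n]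

lemma pfx_congr {a a' : ℕ → Bool} : ∀ n, (∀ m < n, a m = a' m) → pfx a n = pfx a' n
  | 0, _ => rfl
  | n + 1, h => by
      rw [pfx, pfx, h n (by omega), pfx_congr n (fun m hm => h m (by omega))]

lemma node_pfx_mono (hf0 : ¬(range f).Countable) (a : ℕ → Bool) {m n : ℕ} (h : m ≤ n) :
    node f (pfx a n) ⊆ node f (pfx a m) := by
  induction n with
  | zero =>
      have hm : m = 0 := by omega
      subst hm; exact subset_rfl
  | succ n ih =>
      rcases Nat.eq_or_lt_of_le h with rfl | hlt
      · exact subset_rfl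
      · exact (node_cons_subset hf0 (a n) (pfx a n)).trans (ih (by omega))

lemma node_nonempty (hf0 : ¬(range f).Countable) (l : List Bool) : (node f l).Nonempty := by
  have h := (node_good hf0 l).1
  by_contra hc
  rw [not_nonempty_iff_eq_empty] at hc
  rw [hc, image_empty] at h
  exact h countable_empty

/-- Existence of a lexicographically strictly monotone map from Cantor space into
the range of `f`. -/
lemma exists_lex_mono (hf : Continuous f) (hf0 : ¬(range f).Countable) :
    ∃ g : (ℕ → Bool) → ℝ,
      (∀ a, g a ∈ range f) ∧ ∀ a b, LexLt a b → g a < g b := by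
  choose w hw using fun l => node_nonempty hf0 l
  -- the branch point
  set x : (ℕ → Bool) → (ℕ → ℕ) := fun a k => w (pfx a (k + 1)) k with hxdef
  have hxcl : ∀ (a : ℕ → Bool) (n : ℕ), x a ∈ closure (node f (pfx a n)) := by
    intro a n
    have htend : Filter.Tendsto (fun m => w (pfx a (m + 1))) Filter.atTop (nhds (x a)) := by
      rw [tendsto_pi_nhds]
      intro k
      apply Filter.Tendsto.congr' (f₁ := fun _ => x a k)
      · rw [Filter.EventuallyEq, Filter.eventually_atTop]
        refine ⟨k, fun m hm => ?_⟩
        -- w (pfx a (m+1)) k = w (pfx a (k+1)) k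
        have h1 : w (pfx a (m + 1)) ∈ node f (pfx a (k + 1)) :=
          node_pfx_mono hf0 a (by omega) (hw (pfx a (m + 1)))
        have h2 := (node_good hf0 (pfx a (k + 1))).2 _ (hw (pfx a (k + 1))) _ h1 k
          (by rw [pfx_length]; omega)
        exact h2
      · exact tendsto_const_nhds
    refine mem_closure_of_tendsto htend ?_
    rw [Filter.eventually_atTop]
    exact ⟨n, fun m hm => node_pfx_mono hf0 a (by omega) (hw (pfx a (m + 1)))⟩
  refine ⟨fun a => f (x a), fun a => ⟨x a, rfl⟩, ?_⟩
  rintro a b ⟨n, hagree, ha, hb⟩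
  have hpfx : pfx a n = pfx b n := pfx_congr n hagree
  set t := pfx a n with ht
  have hgood := node_good hf0 t
  have hs := stepFn_spec f hgood
  have hpa : pfx a (n + 1) = false :: t := by rw [pfx, ha]
  have hpb : pfx b (n + 1) = true :: t := by rw [pfx, hb, hpfx]
  have hnodea : node f (false :: t) = (stepFn f t.length (node f t)).1.1 := by
    rw [node]; simp
  have hnodeb : node f (true :: t) = (stepFn f t.length (node f t)).1.2 := by
    rw [node]; simp
  -- f (x a) ≤ c₁ < c₂ ≤ f (x b)
  have hxa : f (x a) ∈ closure (f '' node f (false :: t)) := by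
    apply image_closure_subset_closure_image hf
    exact ⟨x a, by rw [← hpa]; exact hxcl a (n + 1), rfl⟩
  have hxb : f (x b) ∈ closure (f '' node f (true :: t)) := by
    apply image_closure_subset_closure_image hf
    exact ⟨x b, by rw [← hpb]; exact hxcl b (n + 1), rfl⟩
  have hle1 : f (x a) ≤ (stepFn f t.length (node f t)).2.1 := by
    have := closure_mono (hnodea ▸ hs.2.2.2.2.2.1) hxa
    rwa [closure_Iio, mem_Iic] at this
  have hle2 : (stepFn f t.length (node f t)).2.2 ≤ f (x b) := by
    have := closure_mono (hnodeb ▸ hs.2.2.2.2.2.2) hxb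
    rwa [closure_Ioi, mem_Ici] at this
  exact lt_of_le_of_lt hle1 (lt_of_lt_of_le hs.2.2.2.2.1 hle2)

lemma uncountable_cantor : ¬Countable (ℕ → Bool) := by
  intro hc
  obtain ⟨h, hinj⟩ := countable_iff_exists_injective (ℕ → Bool) |>.1 hc
  classical
  have : Function.Injective (fun S : Set ℕ => h (fun n => decide (n ∈ S))) := by
    intro S S' hSS
    have := hinj hSS
    ext n
    have hn := congrFun this n
    simpa using hn
  exact Function.cantor_injective _ this

end NoEnt


/-- No uncountable analytic subset of `ℝ` is 2-entangled. -/
theorem no_uncountable_analytic_twoEntangled (E : Set ℝ)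
    (hE : MeasureTheory.AnalyticSet E) (hunc : ¬E.Countable) :
    ¬TwoEntangledSet E := by
  classical
  rw [MeasureTheory.AnalyticSet] at hE
  rcases hE with rfl | ⟨f, hfc, hfr⟩
  · exact absurd Set.countable_empty hunc
  have hf0 : ¬(Set.range f).Countable := by rwa [hfr]
  obtain ⟨g, hgmem, hgmono⟩ := NoEnt.exists_lex_mono hfc hf0
  have hgE : ∀ a, g a ∈ E := fun a => hfr ▸ hgmem a
  have hgne : ∀ a b : ℕ → Bool, a ≠ b → g a ≠ g b := by
    intro a b hab
    rcases NoEnt.lexLt_total hab with h | h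
    · exact ne_of_lt (hgmono _ _ h)
    · exact (ne_of_lt (hgmono _ _ h)).symm
  set φ : (ℕ → Bool) → (Fin 2 → ℝ) :=
    fun s i => if i = 0 then g (NoEnt.bcons false s) else g (NoEnt.bcons true s) with hφ
  have hφ0 : ∀ s, φ s 0 = g (NoEnt.bcons false s) := fun s => by simp [hφ]
  have hφ1 : ∀ s, φ s 1 = g (NoEnt.bcons true s) := fun s => by simp [hφ]
  have hbcons_ne : ∀ (b b' : Bool) (s s' : ℕ → Bool),
      (b ≠ b' ∨ s ≠ s') → NoEnt.bcons b s ≠ NoEnt.bcons b' s' := by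
    intro b b' s s' h hc
    rcases h with h | h
    · exact h (congrFun hc 0)
    · exact h (funext fun k => congrFun hc (k + 1))
  have hφinj : Function.Injective φ := by
    intro s s' h
    by_contra hss
    exact hgne _ _ (hbcons_ne false false s s' (Or.inr hss))
      (by rw [← hφ0 s, ← hφ0 s', h])
  intro hTE
  have hFc : ¬(Set.range φ).Countable := by
    intro hc
    apply NoEnt.uncountable_cantor
    have hcc : Countable (Set.range φ) := hc.to_subtype
    exact Function.Injective.countable
      (f := fun s => (⟨φ s, Set.mem_range_self s⟩ : Set.range φ))
      (fun a b h => hφinj (congrArg Subtype.val h))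
  have hFmem : ∀ e ∈ Set.range φ, ∀ i, e i ∈ E := by
    rintro e ⟨s, rfl⟩ i
    fin_cases i
    · show φ s 0 ∈ E
      rw [hφ0 s]; exact hgE _
    · show φ s 1 ∈ E
      rw [hφ1 s]; exact hgE _
  have hFinj : ∀ e ∈ Set.range φ, Function.Injective e := by
    rintro e ⟨s, rfl⟩
    have h01 : φ s 0 ≠ φ s 1 := by
      rw [hφ0 s, hφ1 s]
      exact ne_of_lt (hgmono _ _ (NoEnt.lexLt_bcons_false_true s s))
    intro i j hij
    fin_cases i <;> fin_cases j
    · rfl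
    · exact absurd hij h01
    · exact absurd hij.symm h01
    · rfl
  have hFpair : (Set.range φ).Pairwise fun e e' => ∀ i j, e i ≠ e' j := by
    rintro e ⟨s, rfl⟩ e' ⟨s', rfl⟩ hne i j
    have hss : s ≠ s' := fun h => hne (by rw [h])
    fin_cases i <;> fin_cases j
    · show φ s 0 ≠ φ s' 0
      rw [hφ0 s, hφ0 s']; exact hgne _ _ (hbcons_ne false false s s' (Or.inr hss))
    · show φ s 0 ≠ φ s' 1
      rw [hφ0 s, hφ1 s']; exact hgne _ _ (hbcons_ne false true s s' (Or.inl (by simp)))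
    · show φ s 1 ≠ φ s' 0
      rw [hφ1 s, hφ0 s']; exact hgne _ _ (hbcons_ne true false s s' (Or.inl (by simp)))
    · show φ s 1 ≠ φ s' 1
      rw [hφ1 s, hφ1 s']; exact hgne _ _ (hbcons_ne true true s s' (Or.inr hss))
  obtain ⟨e, ⟨s, rfl⟩, e', ⟨s', rfl⟩, hne, hreal⟩ :=
    hTE (Set.range φ) hFc hFmem hFinj hFpair (fun i => decide (i = 0))
  have hss : s ≠ s' := fun h => hne (by rw [h])
  rcases hreal with h | h
  · have h0 : φ s' 0 < φ s 0 := (h 0).mp (by decide)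
    have h1 : ¬(φ s' 1 < φ s 1) := fun hlt => by
      have := (h 1).mpr hlt
      exact absurd this (by decide)
    rw [hφ0 s, hφ0 s'] at h0
    rcases NoEnt.lexLt_total hss with hl | hl
    · exact lt_asymm h0 (hgmono _ _ (NoEnt.lexLt_bcons false hl))
    · apply h1
      rw [hφ1 s, hφ1 s']
      exact hgmono _ _ (NoEnt.lexLt_bcons true hl)
  · have h0 : φ s 0 < φ s' 0 := (h 0).mp (by decide)
    have h1 : ¬(φ s 1 < φ s' 1) := fun hlt => by
      have := (h 1).mpr hlt
      exact absurd this (by decide)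
    rw [hφ0 s, hφ0 s'] at h0
    rcases NoEnt.lexLt_total hss with hl | hl
    · apply h1
      rw [hφ1 s, hφ1 s']
      exact hgmono _ _ (NoEnt.lexLt_bcons true hl)
    · exact lt_asymm h0 (hgmono _ _ (NoEnt.lexLt_bcons false hl))
end

section
/- Let n ≥ 1, let E ⊆ ℝ be a (2^ℵ₀, n)-entangled set of reals, and let g : F → E be a function where F ⊆ Eⁿ has cardinality 2^ℵ₀ and consists of injective, pairwise disjoint n-tuples. If g has 2^ℵ₀-many discontinuity points, then for every t ∈ 2^(n+1) there are two distinct points x, y on the graph of g (viewed as (n+1)-tuples) that realize t. -/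
open Cardinal

/-- `E ⊆ ℝ` is `(κ, n)`-entangled. -/
def EntangledSet (κ : Cardinal) (n : ℕ) (E : Set ℝ) : Prop :=
  κ ≤ #E ∧
  ∀ F : Set (Fin n → ℝ),
    (∀ e ∈ F, ∀ i, e i ∈ E) →
    (∀ e ∈ F, Function.Injective e) →
    (F.Pairwise fun e e' => ∀ i j, e i ≠ e' j) →
    #F = κ →
    ∀ t : Fin n → Bool, ∃ e ∈ F, ∃ e' ∈ F, e ≠ e' ∧ Realizes t e e'

/-!
At each discontinuity point, `g` jumps across some rational level `q`, upwards or downwards.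
Since the continuum has uncountable cofinality, continuum many points of `F` jump across the
same `q` in the same direction, and entangledness of this subfamily yields `u ≠ v` whose
coordinatewise type is `t` restricted to the first `n` coordinates. Both `g u` and `g v` lie on
the same side of `q`, while arbitrarily close to `u` and to `v` there are points `w ∈ F` with
`g w` on the other side. Such a `w` close enough to `u` (resp. `v`) has the same type against
`v` (resp. `u`), and choosing between `u` and `v` settles the last coordinate of `t`.
-/

open Filter Topology

theorem aleph0_lt_cof_continuum : ℵ₀ < (ord 𝔠).cof := by
  rw [← two_power_aleph0]
  exact lt_cof_ord_power le_rfl one_lt_two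

theorem realizes_snoc {n : ℕ} {t : Fin (n + 1) → Bool} {e e' : Fin n → ℝ} {y y' : ℝ}
    (hinit : ∀ i, Fin.init t i = true ↔ e' i < e i) (hlast : t (Fin.last n) = true ↔ y' < y) :
    Realizes t (Fin.snoc e y) (Fin.snoc e' y') :=
  Or.inl fun i => Fin.lastCases (by simpa using hlast)
    (fun i => by simp only [Fin.snoc_castSucc]; exact hinit i) i

theorem eventually_nhds_lt_iff_lt {ι : Type*} [Finite ι] {u v : ι → ℝ} (huv : ∀ i, u i ≠ v i) :
    ∀ᶠ p in 𝓝 (u, v), ∀ i, (v i < u i ↔ p.2 i < p.1 i) := by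
  refine eventually_all.2 fun i => ?_
  have hfst : Tendsto (fun p : (ι → ℝ) × (ι → ℝ) => p.1 i) (𝓝 (u, v)) (𝓝 (u i)) :=
    ((continuous_apply i).comp continuous_fst).continuousAt
  have hsnd : Tendsto (fun p : (ι → ℝ) × (ι → ℝ) => p.2 i) (𝓝 (u, v)) (𝓝 (v i)) :=
    ((continuous_apply i).comp continuous_snd).continuousAt
  rcases (huv i).lt_or_gt with h | h
  · filter_upwards [hfst.eventually_lt hsnd h] with p hp
    simp [h.not_gt, hp.not_gt]
  · filter_upwards [hsnd.eventually_lt hfst h] with p hp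
    simp [h, hp]

def JumpsAcross {α : Type*} [TopologicalSpace α] (s : Set α) (f : α → ℝ) (x : α) (q : ℝ) :
    Bool → Prop
  | true => f x < q ∧ ∃ᶠ y in 𝓝[s] x, q < f y
  | false => q < f x ∧ ∃ᶠ y in 𝓝[s] x, f y < q

theorem exists_rat_jumpsAcross_of_not_continuousWithinAt {α : Type*} [TopologicalSpace α]
    {s : Set α} {f : α → ℝ} {x : α} (h : ¬ContinuousWithinAt f s x) :
    ∃ q : ℚ, ∃ up : Bool, JumpsAcross s f x q up := by
  rw [ContinuousWithinAt, tendsto_order, not_and_or] at h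
  push Not at h
  rcases h with ⟨a, ha, hfreq⟩ | ⟨a, ha, hfreq⟩
  · obtain ⟨q, haq, hqx⟩ := exists_rat_btwn ha
    exact ⟨q, false, hqx, hfreq.mono fun y hy => hy.trans_lt haq⟩
  · obtain ⟨q, hxq, hqa⟩ := exists_rat_btwn ha
    exact ⟨q, true, hxq, hfreq.mono fun y hy => hqa.trans_le hy⟩

theorem exists_mem_and_of_frequently_nhdsWithin {α : Type*} [TopologicalSpace α] {s : Set α}
    {x : α} {P Q : α → Prop} (hP : ∃ᶠ y in 𝓝[s] x, P y) (hQ : ∀ᶠ y in 𝓝 x, Q y) :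
    ∃ y ∈ s, P y ∧ Q y :=
  let ⟨y, ⟨hPy, hy⟩, hQy⟩ :=
    ((hP.and_eventually self_mem_nhdsWithin).and_eventually (nhdsWithin_le_nhds hQ)).exists
  ⟨y, hy, hPy, hQy⟩

theorem exists_pair_of_jumpsAcross {ι : Type*} [Finite ι] {F : Set (ι → ℝ)} {f : (ι → ℝ) → ℝ}
    {u v : ι → ℝ} {q : ℝ} {up : Bool} (hu : u ∈ F) (hv : v ∈ F) (huv : ∀ i, u i ≠ v i)
    (hju : JumpsAcross F f u q up) (hjv : JumpsAcross F f v q up) (b : Bool) :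
    ∃ e ∈ F, ∃ e' ∈ F, (∀ i, (v i < u i ↔ e' i < e i)) ∧
      (b = true ↔ f e' < f e) ∧ f e ≠ f e' := by
  have hpat := eventually_nhds_lt_iff_lt huv
  have near_u {P : (ι → ℝ) → Prop} (h : ∃ᶠ y in 𝓝[F] u, P y) :=
    exists_mem_and_of_frequently_nhdsWithin h
      (((Continuous.prodMk_left v).tendsto u).eventually hpat)
  have near_v {P : (ι → ℝ) → Prop} (h : ∃ᶠ y in 𝓝[F] v, P y) :=
    exists_mem_and_of_frequently_nhdsWithin h
      (((Continuous.prodMk_right u).tendsto v).eventually hpat)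
  -- `w` is taken near `u` or near `v`, and on the far side of `q` from both `f u` and `f v`.
  cases up <;> obtain ⟨hfu, hu'⟩ := hju <;> obtain ⟨hfv, hv'⟩ := hjv <;> cases b
  · obtain ⟨w, hwF, hfw, hw⟩ := near_u hu'
    have h : f w < f v := hfw.trans hfv
    exact ⟨w, hwF, v, hv, hw, iff_of_false Bool.false_ne_true h.not_gt, h.ne⟩
  · obtain ⟨w, hwF, hfw, hw⟩ := near_v hv'
    have h : f w < f u := hfw.trans hfu
    exact ⟨u, hu, w, hwF, hw, iff_of_true rfl h, h.ne'⟩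
  · obtain ⟨w, hwF, hfw, hw⟩ := near_v hv'
    have h : f u < f w := hfu.trans hfw
    exact ⟨u, hu, w, hwF, hw, iff_of_false Bool.false_ne_true h.not_gt, h.ne⟩
  · obtain ⟨w, hwF, hfw, hw⟩ := near_u hu'
    have h : f v < f w := hfv.trans hfw
    exact ⟨w, hwF, v, hv, hw, iff_of_true rfl h, h.ne'⟩

theorem exists_jumpsAcross_of_many_discontinuities {α : Type} [TopologicalSpace α] {F : Set α}
    {f : α → ℝ} (h : 𝔠 ≤ #{x : F | ¬ContinuousAt (fun y : F => f y) x}) :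
    ∃ (q : ℝ) (up : Bool) (S : Set α), S ⊆ F ∧ 𝔠 ≤ #S ∧ ∀ x ∈ S, JumpsAcross F f x q up := by
  set D := {x : F | ¬ContinuousAt (fun y : F => f y) x}
  have hjump (x : D) : ∃ qu : ℚ × Bool, JumpsAcross F f x.1 qu.1 qu.2 :=
    let ⟨q, up, h⟩ := exists_rat_jumpsAcross_of_not_continuousWithinAt
      (mt (continuousWithinAt_iff_continuousAt_domRestrict f x.1.2).1 x.2)
    ⟨(q, up), h⟩
  choose c hc using hjump
  obtain ⟨⟨q, up⟩, T, hTD, hT, hcT⟩ := infinite_pigeonhole_set c 𝔠 h aleph0_le_continuum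
    (by rw [mk_eq_aleph0]; exact aleph0_lt_cof_continuum)
  refine ⟨q, up, Subtype.val '' T, Subtype.coe_image_subset F T,
    hT.trans (mk_image_eq Subtype.val_injective).ge, ?_⟩
  rintro _ ⟨x, hx, rfl⟩
  simpa [hcT hx] using hc ⟨x, hTD hx⟩

theorem graph_realizes_of_many_discontinuities_general (n : ℕ) (E : Set ℝ)
    (hE : EntangledSet Cardinal.continuum n E)
    (F : Set (Fin n → ℝ)) (g : (Fin n → ℝ) → ℝ)
    (hFE : ∀ e ∈ F, ∀ i, e i ∈ E)
    (hinj : ∀ e ∈ F, Function.Injective e)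
    (hdisj : F.Pairwise fun e e' => ∀ i j, e i ≠ e' j)
    (hFcard : #F = Cardinal.continuum)
    (hdiscont : #{e : F | ¬ContinuousAt (fun x : F => g x.1) e} = Cardinal.continuum) :
    ∀ t : Fin (n + 1) → Bool, ∃ e ∈ F, ∃ e' ∈ F, e ≠ e' ∧
      Realizes t (Fin.snoc e (g e)) (Fin.snoc e' (g e')) := by
  intro t
  obtain ⟨q, up, S, hSF, hS, hjump⟩ := exists_jumpsAcross_of_many_discontinuities hdiscont.ge
  obtain ⟨u, hu, v, hv, huv, hreal⟩ := hE.2 S (fun e he => hFE e (hSF he))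
    (fun e he => hinj e (hSF he)) (hdisj.mono hSF)
    (le_antisymm (hFcard ▸ mk_le_mk_of_subset hSF) hS) (Fin.init t)
  obtain ⟨u, hu, v, hv, huv, hinit⟩ :
      ∃ u ∈ S, ∃ v ∈ S, u ≠ v ∧ ∀ i, Fin.init t i = true ↔ v i < u i := by
    rcases hreal with h | h
    exacts [⟨u, hu, v, hv, huv, h⟩, ⟨v, hv, u, hu, huv.symm, h⟩]
  obtain ⟨e, he, e', he', hpat, hlast, hne⟩ :=
    exists_pair_of_jumpsAcross (hSF hu) (hSF hv) (fun i => hdisj (hSF hu) (hSF hv) huv i i)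
      (hjump u hu) (hjump v hv) (t (Fin.last n))
  exact ⟨e, he, e', he', ne_of_apply_ne g hne,
    realizes_snoc (fun i => (hinit i).trans (hpat i)) hlast⟩

/-- If `g : F → E`, with `F` a continuum-sized family of injective pairwise
disjoint `n`-tuples of a `(2^ℵ₀, n)`-entangled set `E`, has continuum many
discontinuity points, then every `t ∈ 2^(n+1)` is realized by two distinct
points of the graph of `g`. -/
theorem graph_realizes_of_many_discontinuities (n : ℕ) (hn : 1 ≤ n) (E : Set ℝ)
    (hE : EntangledSet Cardinal.continuum n E)
    (F : Set (Fin n → ℝ)) (g : (Fin n → ℝ) → ℝ)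
    (hFE : ∀ e ∈ F, ∀ i, e i ∈ E)
    (hinj : ∀ e ∈ F, Function.Injective e)
    (hdisj : F.Pairwise fun e e' => ∀ i j, e i ≠ e' j)
    (hFcard : #F = Cardinal.continuum)
    (hgE : ∀ e ∈ F, g e ∈ E)
    (hdiscont : #{e : F | ¬ContinuousAt (fun x : F => g x.1) e} = Cardinal.continuum) :
    ∀ t : Fin (n + 1) → Bool, ∃ e ∈ F, ∃ e' ∈ F, e ≠ e' ∧
      Realizes t (Fin.snoc e (g e)) (Fin.snoc e' (g e')) :=
  graph_realizes_of_many_discontinuities_general n E hE F g hFE hinj hdisj hFcard hdiscont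
end

section
/- Suppose there exists a κ-crowded, κ-entangled set of reals E with a nontrivial autohomeomorphism. Then there exist two homeomorphic sets of reals A and B such that A is κ-entangled but B is not (κ, 2)-entangled. -/
open Cardinal

/-- `E ⊆ ℝ` is κ-crowded: every open set meeting `E` meets it in ≥ κ points. -/
def Crowded (κ : Cardinal) (E : Set ℝ) : Prop :=
  ∀ U : Set ℝ, IsOpen U → (U ∩ E).Nonempty → κ ≤ #(U ∩ E : Set ℝ)

open Set Set.Notation Metric Topology

/-!
Pick a point `x` moved by the autohomeomorphism `f` and a ball `S` around `x` in `E` such that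
`S` and `f '' S` are separated by open sets. Then `A := S ∪ f '' S` is a subset of `E` of size
`≥ κ` (crowdedness), so it is κ-entangled, and it is homeomorphic to two disjoint copies of `S`.
Realising the second copy as a translate `S + c` far to the right gives `B := S ∪ (S + c)`, in
which the translation is a strictly increasing bijection between two disjoint `κ`-sized pieces,
so `B` is not `(κ, 2)`-entangled.
-/

section SeparatedNhds

variable {X : Type*} [TopologicalSpace X] {s t : Set X}

theorem SeparatedNhds.isOpen_preimage_val_left (h : SeparatedNhds s t) {r : Set X}
    (hr : r ⊆ s ∪ t) : IsOpen (r ↓∩ s) :=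
  (h.preimage continuous_subtype_val).isOpen_left_of_isOpen_union <| by
    rw [← preimage_union, preimage_val_eq_univ_of_subset hr]
    exact isOpen_univ

noncomputable def SeparatedNhds.sumHomeomorphUnion (h : SeparatedNhds s t) :
    s ⊕ t ≃ₜ ↥(s ∪ t) :=
  have hemb := (IsOpenEmbedding.inclusion subset_union_left
      (h.isOpen_preimage_val_left subset_rfl)).sumElim
    (IsOpenEmbedding.inclusion subset_union_right
      (h.symm.isOpen_preimage_val_left (union_comm s t).subset))
    ((inclusion_injective _).sumElim (inclusion_injective _)
      fun a b hab => h.disjoint.ne_of_mem a.2 b.2 (congrArg Subtype.val hab))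
  hemb.isEmbedding.toHomeomorphOfSurjective <| by
    rintro ⟨y, hy | hy⟩
    exacts [⟨.inl ⟨y, hy⟩, rfl⟩, ⟨.inr ⟨y, hy⟩, rfl⟩]

noncomputable def SeparatedNhds.homeomorphUnion {Y : Type*} [TopologicalSpace Y] {s' t' : Set Y}
    (h : SeparatedNhds s t) (h' : SeparatedNhds s' t') (e₁ : s ≃ₜ s') (e₂ : t ≃ₜ t') :
    ↥(s ∪ t) ≃ₜ ↥(s' ∪ t') :=
  h.sumHomeomorphUnion.symm.trans <| (e₁.sumCongr e₂).trans h'.sumHomeomorphUnion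

theorem exists_separatedNhds_ball_image {Y : Type*} [MetricSpace Y] {f : Y → Y}
    (hf : Continuous f) {x : Y} (hx : f x ≠ x) :
    ∃ r > 0, SeparatedNhds (ball x r) (f '' ball x r) := by
  obtain ⟨U, V, hU, hV, hxU, hfxV, hUV⟩ := t2_separation hx.symm
  obtain ⟨r, hr, hball⟩ := Metric.isOpen_iff.mp (hU.inter (hV.preimage hf)) x ⟨hxU, hfxV⟩
  exact ⟨r, hr, U, V, hU, hV, hball.trans inter_subset_left,
    image_subset_iff.mpr (hball.trans inter_subset_right), hUV⟩

end SeparatedNhds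

theorem separatedNhds_image_add_of_subset_ball {s : Set ℝ} {a r : ℝ} (hr : 0 < r)
    (hs : s ⊆ ball a r) : SeparatedNhds s ((· + 2 * r) '' s) := by
  refine ⟨ball a r, ball (a + 2 * r) r, isOpen_ball, isOpen_ball, hs, ?_, ball_disjoint_ball ?_⟩
  · rintro _ ⟨y, hy, rfl⟩
    simpa [Real.dist_eq] using hs hy
  · rw [Real.dist_eq, abs_sub_comm, add_sub_cancel_left, abs_of_pos (by positivity)]
    linarith

theorem EntangledSet.mono {κ : Cardinal} {n : ℕ} {E A : Set ℝ} (hE : EntangledSet κ n E)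
    (hAE : A ⊆ E) (hA : κ ≤ #A) : EntangledSet κ n A :=
  ⟨hA, fun F hF => hE.2 F fun e he i => hAE (hF e he i)⟩

theorem not_entangledSet_two_of_strictMonoOn {κ : Cardinal} {B S : Set ℝ} {g : ℝ → ℝ}
    (hg : StrictMonoOn g S) (hSB : S ⊆ B) (hgSB : g '' S ⊆ B) (hdisj : Disjoint S (g '' S))
    (hS : κ ≤ #S) : ¬EntangledSet κ 2 B := by
  rintro ⟨-, hB⟩
  obtain ⟨T, hTS, hT⟩ := le_mk_iff_exists_subset.mp hS
  set pair : ℝ → Fin 2 → ℝ := fun d => ![d, g d]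
  have hpair : pair.Injective := fun a b hab => congrFun hab 0
  have hne : ∀ ⦃a⦄, a ∈ T → ∀ ⦃b⦄, b ∈ T → a ≠ g b := fun a ha b hb =>
    hdisj.ne_of_mem (hTS ha) (mem_image_of_mem g (hTS hb))
  obtain ⟨_, ⟨d, hd, rfl⟩, _, ⟨d', hd', rfl⟩, hdd', hreal⟩ := hB (pair '' T)
    (by
      rintro _ ⟨d, hd, rfl⟩ i
      fin_cases i
      exacts [hSB (hTS hd), hgSB (mem_image_of_mem g (hTS hd))])
    (by
      rintro _ ⟨d, hd, rfl⟩ i j hij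
      fin_cases i <;> fin_cases j
      exacts [rfl, (hne hd hd hij).elim, (hne hd hd hij.symm).elim, rfl])
    (by
      rintro _ ⟨d, hd, rfl⟩ _ ⟨d', hd', rfl⟩ hdd' i j
      have hdd' : d ≠ d' := fun h => hdd' (congrArg pair h)
      fin_cases i <;> fin_cases j
      exacts [hdd', hne hd hd', (hne hd' hd).symm, mt (hg.injOn (hTS hd) (hTS hd')) hdd'])
    (by rw [mk_image_eq hpair, hT])
    ![true, false]
  rcases hreal with H | H <;> have H0 := H 0 <;> have H1 := H 1 <;> simp [pair] at H0 H1
  · exact (hg (hTS hd') (hTS hd) H0).not_ge H1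
  · exact (hg (hTS hd) (hTS hd') H0).not_ge H1

theorem homeomorphic_entangled_non_entangled_general (κ : Cardinal)
    (E : Set ℝ) (hcrowd : Crowded κ E)
    (hent : ∀ n : ℕ, 1 ≤ n → EntangledSet κ n E)
    (h : ∃ f : E ≃ₜ E, f ≠ Homeomorph.refl E) :
    ∃ A B : Set ℝ, Nonempty (A ≃ₜ B) ∧
      (∀ n : ℕ, 1 ≤ n → EntangledSet κ n A) ∧ ¬EntangledSet κ 2 B := by
  obtain ⟨f, hf⟩ := h
  obtain ⟨x, hx⟩ := DFunLike.ne_iff.mp hf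
  obtain ⟨r, hr, hsep⟩ := exists_separatedNhds_ball_image f.continuous hx
  set S := ball x r
  set D : Set ℝ := (↑) '' S
  have hD : D = E ∩ ball (x : ℝ) r := Subtype.image_preimage_coe E (ball (x : ℝ) r)
  have hκD : κ ≤ #D := by
    rw [hD, inter_comm]
    exact hcrowd _ isOpen_ball ⟨x, mem_ball_self hr, x.2⟩
  set g := Homeomorph.addRight (2 * r)
  have hsepD : SeparatedNhds D (g '' D) :=
    separatedNhds_image_add_of_subset_ball hr (hD ▸ inter_subset_right)
  refine ⟨(↑) '' (S ∪ f '' S), D ∪ g '' D, ⟨?_⟩, fun n hn => (hent n hn).mono ?_ ?_,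
    not_entangledSet_two_of_strictMonoOn (g := g) (fun _ _ _ _ hab => add_lt_add_left hab _)
      subset_union_left subset_union_right hsepD.disjoint hκD⟩
  · have hS : S ≃ₜ D := IsEmbedding.subtypeVal.homeomorphImage S
    exact (IsEmbedding.subtypeVal.homeomorphImage _).symm.trans <|
      hsep.homeomorphUnion hsepD hS ((f.image S).symm.trans (hS.trans (g.image D)))
  · rintro _ ⟨y, -, rfl⟩
    exact y.2
  · exact hκD.trans (mk_le_mk_of_subset (image_mono subset_union_left))

/-- From a κ-crowded, κ-entangled set of reals with a nontrivial
autohomeomorphism, one obtains homeomorphic `A, B ⊆ ℝ` with `A` κ-entangled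
and `B` not `(κ, 2)`-entangled. -/
theorem homeomorphic_entangled_non_entangled (κ : Cardinal) (hκ : ℵ₀ ≤ κ)
    (E : Set ℝ) (hcrowd : Crowded κ E)
    (hent : ∀ n : ℕ, 1 ≤ n → EntangledSet κ n E)
    (h : ∃ f : E ≃ₜ E, f ≠ Homeomorph.refl E) :
    ∃ A B : Set ℝ, Nonempty (A ≃ₜ B) ∧
      (∀ n : ℕ, 1 ≤ n → EntangledSet κ n A) ∧ ¬EntangledSet κ 2 B :=
  homeomorphic_entangled_non_entangled_general κ E hcrowd hent h
end
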